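/- Let D, E be finite sets (inputs and hyperedges), V a finite vertex set, and B ⊆ V a set of boundary vertices. For each x ∈ D let U_x : V → ℂ be a potential function; for each e ∈ E and x ∈ D let δ_x^e ∈ ℂ^V be a net-flow vector; for each e ∈ E let H_e be a finite-dimensional complex inner product space and, for each x ∈ D, let O_x^e be a unitary on H_e with (O_x^e)² = I, together with vectors w_x^{e,+}, w_x^{e,−} ∈ H_e satisfying O_x^e w_x^{e,±} = ± w_x^{e,±} and ⟨w_x^{e,+}, w_y^{e,−}⟩ = Σ_{v∈V} conj(δ_x^e(v)) · U_y(v) for all x, y ∈ D. Assume that for every internal vertex v ∈ V∖B and every x ∈ D, Σ_{e∈E} δ_x^e(v) = 0. Define δ_x(v) := Σ_{e∈E} δ_x^e(v), w_x^± := ⊕_{e∈E} w_x^{e,±} ∈ ⊕_{e∈E} H_e, and O_x := ⊕_{e∈E} O_x^e. Then for all x, y ∈ D: O_x w_x^± = ± w_x^±, ‖w_x^±‖² = Σ_{e∈E} ‖w_x^{e,±}‖², and ⟨w_x^+, w_y^-⟩ = Σ_{v∈B} conj(δ_x(v)) · U_y(v). -/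

import Mathlib

/-!
The composed witnesses live in the orthogonal direct sum, so the eigenvector equations and the
norms hold edge by edge, and the inner product `⟪w_x⁺, w_y⁻⟫` is the sum over hyperedges of the
local pairings `Σ_v conj(δ_x^e(v)) U_y(v)`. Exchanging the two sums gives
`Σ_v conj(δ_x(v)) U_y(v)`, in which every internal vertex contributes nothing because the net
flow there vanishes.
-/

open scoped InnerProductSpace ComplexConjugate

noncomputable section

/-- The direct sum `⊕_e O_e` of a family of operators, acting componentwise on the
Hilbert-space direct sum `⊕_e H_e`. -/
def dirSumOp {E : Type*} [Fintype E] {H : E → Type*}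
    [∀ e, NormedAddCommGroup (H e)] [∀ e, InnerProductSpace ℂ (H e)]
    (O : ∀ e, H e →ₗ[ℂ] H e) : PiLp 2 H →ₗ[ℂ] PiLp 2 H :=
  (WithLp.linearEquiv 2 ℂ (∀ e, H e)).symm.toLinearMap ∘ₗ
    (LinearMap.pi fun e => O e ∘ₗ LinearMap.proj e) ∘ₗ
      (WithLp.linearEquiv 2 ℂ (∀ e, H e)).toLinearMap

theorem dirSumOp_toLp {ι : Type*} [Fintype ι] {H : ι → Type*}
    [∀ i, NormedAddCommGroup (H i)] [∀ i, InnerProductSpace ℂ (H i)]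
    (O : ∀ i, H i →ₗ[ℂ] H i) (w : ∀ i, H i) :
    dirSumOp O (WithLp.toLp 2 w) = WithLp.toLp 2 fun i => O i (w i) :=
  rfl

theorem sum_sum_conj_mul_eq_sum_of_sum_eq_zero {R E V : Type*} [CommSemiring R] [StarRing R]
    [Fintype E] [Fintype V] (B : Finset V) (δ : E → V → R) (U : V → R)
    (hinternal : ∀ v ∉ B, ∑ e, δ e v = 0) :
    ∑ e, ∑ v, conj (δ e v) * U v = ∑ v ∈ B, conj (∑ e, δ e v) * U v := by
  calc ∑ e, ∑ v, conj (δ e v) * U v = ∑ v, conj (∑ e, δ e v) * U v := by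
        rw [Finset.sum_comm]
        simp only [map_sum, Finset.sum_mul]
    _ = ∑ v ∈ B, conj (∑ e, δ e v) * U v :=
        (Finset.sum_subset (Finset.subset_univ B) fun v _ hv => by
          rw [hinternal v hv, map_zero, zero_mul]).symm

theorem generalized_graph_composition_general
    {D E V : Type*} [Fintype E] [Fintype V]
    (B : Finset V) (U : D → V → ℂ) (δe : E → D → V → ℂ)
    (H : E → Type*) [∀ e, NormedAddCommGroup (H e)] [∀ e, InnerProductSpace ℂ (H e)]
    (O : ∀ e : E, D → (H e →ₗ[ℂ] H e))
    (wp wm : ∀ e : E, D → H e)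
    (hwp : ∀ e x, O e x (wp e x) = wp e x)
    (hwm : ∀ e x, O e x (wm e x) = -wm e x)
    (hfeas : ∀ e x y, ⟪wp e x, wm e y⟫_ℂ = ∑ v, conj (δe e x v) * U y v)
    (hinternal : ∀ v ∉ B, ∀ x, ∑ e, δe e x v = 0)
    (δ : D → V → ℂ) (hδ : ∀ x v, δ x v = ∑ e, δe e x v)
    (Wp Wm : D → PiLp 2 H)
    (hWp : ∀ x, Wp x = (WithLp.equiv 2 (∀ e, H e)).symm fun e => wp e x)
    (hWm : ∀ x, Wm x = (WithLp.equiv 2 (∀ e, H e)).symm fun e => wm e x) :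
    (∀ x, dirSumOp (fun e => O e x) (Wp x) = Wp x) ∧
    (∀ x, dirSumOp (fun e => O e x) (Wm x) = -Wm x) ∧
    (∀ x, ‖Wp x‖ ^ 2 = ∑ e, ‖wp e x‖ ^ 2 ∧ ‖Wm x‖ ^ 2 = ∑ e, ‖wm e x‖ ^ 2) ∧
    (∀ x y, ⟪Wp x, Wm y⟫_ℂ = ∑ v ∈ B, conj (δ x v) * U y v) := by
  simp only [WithLp.equiv_symm_apply] at hWp hWm
  refine ⟨fun x => ?_, fun x => ?_, fun x => ?_, fun x y => ?_⟩
  · simp only [hWp, dirSumOp_toLp, hwp]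
  · simp only [hWm, dirSumOp_toLp, hwm]
    rfl
  · exact ⟨hWp x ▸ PiLp.norm_sq_eq_of_L2 H _, hWm x ▸ PiLp.norm_sq_eq_of_L2 H _⟩
  · simp only [hWp, hWm, PiLp.inner_apply, hfeas, hδ]
    exact sum_sum_conj_mul_eq_sum_of_sum_eq_zero B (fun e => δe e x) (U y)
      fun v hv => hinternal v hv x

/-- composition of hyperedges / generalized graph composition.
Given a hypergraph with hyperedges `E`, vertices `V`, boundary vertices `B ⊆ V`,
a feasible solution `w^{e,±}` to the hyperedge problem `(δ_x^e, U_x, O_x^e)` for each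
hyperedge `e`, and assuming the net-flows vanish at every internal vertex, the direct sums
`w_x^± := ⊕_e w_x^{e,±}` form a feasible solution to the hyperedge problem on the boundary
vertices: they are `±1`-eigenvectors of `O_x := ⊕_e O_x^e`, their squared norms add up, and
`⟪w_x⁺, w_y⁻⟫ = Σ_{v ∈ B} conj(δ_x(v)) · U_y(v)` where `δ_x(v) = Σ_e δ_x^e(v)`. -/
theorem generalized_graph_composition
    {D E V : Type*} [Fintype D] [Fintype E] [Fintype V]
    (B : Finset V) (U : D → V → ℂ) (δe : E → D → V → ℂ)
    (H : E → Type*) [∀ e, NormedAddCommGroup (H e)] [∀ e, InnerProductSpace ℂ (H e)]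
    [∀ e, FiniteDimensional ℂ (H e)]
    (O : ∀ e : E, D → (H e →ₗ[ℂ] H e))
    (hOunitary : ∀ e x (u v : H e), ⟪O e x u, O e x v⟫_ℂ = ⟪u, v⟫_ℂ)
    (hOinv : ∀ e x (v : H e), O e x (O e x v) = v)
    (wp wm : ∀ e : E, D → H e)
    (hwp : ∀ e x, O e x (wp e x) = wp e x)
    (hwm : ∀ e x, O e x (wm e x) = -wm e x)
    (hfeas : ∀ e x y, ⟪wp e x, wm e y⟫_ℂ = ∑ v, conj (δe e x v) * U y v)
    (hinternal : ∀ v ∉ B, ∀ x, ∑ e, δe e x v = 0)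
    (δ : D → V → ℂ) (hδ : ∀ x v, δ x v = ∑ e, δe e x v)
    (Wp Wm : D → PiLp 2 H)
    (hWp : ∀ x, Wp x = (WithLp.equiv 2 (∀ e, H e)).symm fun e => wp e x)
    (hWm : ∀ x, Wm x = (WithLp.equiv 2 (∀ e, H e)).symm fun e => wm e x) :
    (∀ x, dirSumOp (fun e => O e x) (Wp x) = Wp x) ∧
    (∀ x, dirSumOp (fun e => O e x) (Wm x) = -Wm x) ∧
    (∀ x, ‖Wp x‖ ^ 2 = ∑ e, ‖wp e x‖ ^ 2 ∧ ‖Wm x‖ ^ 2 = ∑ e, ‖wm e x‖ ^ 2) ∧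
    (∀ x y, ⟪Wp x, Wm y⟫_ℂ = ∑ v ∈ B, conj (δ x v) * U y v) :=
  generalized_graph_composition_general B U δe H O wp wm hwp hwm hfeas hinternal δ hδ Wp Wm hWp hWm

end
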